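/- arXiv:2401.15816 — 2 statements merged into one kernel-verified Lean document; each statement's English description precedes it below -/
import Mathlib

section
/- Let τ > 0 and 0 < A < 1 + τ. Then g_o(A,τ) > 0, and for every square-summable θ : ℕ → ℝ and every integer d with 1 ≤ d < d_τ(θ): P_θ({x ∈ ℝ^ℕ : crit_A(x,d) ≤ crit_A(x,d_τ(θ))}) ≤ exp( −g_o(A,τ) · (d_τ(θ) − d) ). -/
open MeasureTheory ProbabilityTheory

noncomputable section

/-- Tail sum `∑_{i>d} θ_i²` (indices `i = 1,2,…`). -/
def tailSum (θ : ℕ → ℝ) (d : ℕ) : ℝ := ∑' i : ℕ, if d < i then θ i ^ 2 else 0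

/-- The τ-quantization error `r_τ(d,θ) = ∑_{i>d} θ_i² + τ d ε²`. -/
def rErr (ε τ : ℝ) (θ : ℕ → ℝ) (d : ℕ) : ℝ := tailSum θ d + τ * d * ε ^ 2

/-- The local effective τ-dimension: the smallest `d ≥ 1` minimizing `r_τ(·,θ)` over `d ≥ 1`. -/
def effDim (ε τ : ℝ) (θ : ℕ → ℝ) : ℕ :=
  sInf {d : ℕ | 1 ≤ d ∧ ∀ d' : ℕ, 1 ≤ d' → rErr ε τ θ d ≤ rErr ε τ θ d'}

/-- The penalized criterion `crit_A(x,d) = -∑_{i=1}^d x_i² + A ε² d`. -/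
def critF (ε A : ℝ) (x : ℕ → ℝ) (d : ℕ) : ℝ :=
  -(∑ i ∈ Finset.Icc 1 d, x i ^ 2) + A * ε ^ 2 * d

/-- `f(h,a,t) = (1/2)(a h + log(1-h) - t h/(1-h))`. -/
def fFun (h a t : ℝ) : ℝ := (a * h + Real.log (1 - h) - t * h / (1 - h)) / 2

/-- `g(h,a,t) = f(-h,a,t)`. -/
def gFun (h a t : ℝ) : ℝ := fFun (-h) a t

/-- `f_o(a,t) = sup_{h ∈ [0,1)} f(h,a,t)`. -/
def fSup (a t : ℝ) : ℝ := sSup ((fun h => fFun h a t) '' Set.Ico 0 1)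

/-- `g_o(a,t) = sup_{h ∈ [0,1]} g(h,a,t)`. -/
def gSup (a t : ℝ) : ℝ := sSup ((fun h => gFun h a t) '' Set.Icc 0 1)

/-- `P` is the infinite product measure `⨂_{i≥1} N(θ_i, ε²)` on the sequence space `ℝ^ℕ`,
characterized by being a probability measure whose finite-dimensional projections onto
the coordinates `1,…,n` are the corresponding finite products of Gaussians. -/
def IsGaussianProduct (ε : ℝ) (θ : ℕ → ℝ) (P : Measure (ℕ → ℝ)) : Prop :=
  IsProbabilityMeasure P ∧
  ∀ n : ℕ, P.map (fun x (i : Fin n) => x ((i : ℕ) + 1)) =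
    Measure.pi fun i : Fin n => gaussianReal (θ ((i : ℕ) + 1)) ((ε ^ 2).toNNReal)

open Real
open scoped NNReal ENNReal

lemma quad_int (b c : ℝ) (hb : 0 < b) :
    ∫ x : ℝ, Real.exp (-b * x ^ 2 + c * x) =
      Real.sqrt (π / b) * Real.exp (c ^ 2 / (4 * b)) := by
  have h : ∀ x : ℝ, Real.exp (-b * x ^ 2 + c * x) =
      Real.exp (-b * (x - c / (2 * b)) ^ 2) * Real.exp (c ^ 2 / (4 * b)) := by
    intro x
    rw [← Real.exp_add]
    congr 1
    field_simp
    ring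
  simp_rw [h, integral_mul_const,
    integral_sub_right_eq_self (fun x : ℝ => Real.exp (-b * x ^ 2)) (c / (2 * b)),
    integral_gaussian]

lemma gauss_mgf (ε h μ : ℝ) (hε : 0 < ε) (hh : 0 ≤ h) :
    ∫ x : ℝ, Real.exp (-(h / (2 * ε ^ 2) * x ^ 2)) ∂(gaussianReal μ ((ε ^ 2).toNNReal)) =
      Real.exp (-(h * μ ^ 2) / (2 * ε ^ 2 * (1 + h))) / Real.sqrt (1 + h) := by
  have hv0 : (0:ℝ) < ε ^ 2 := by positivity
  have hvne : ((ε ^ 2).toNNReal) ≠ 0 := by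
    simp [Real.toNNReal_eq_zero, not_le, hv0, hε.ne']
  have hvv : (((ε ^ 2).toNNReal : ℝ≥0) : ℝ) = ε ^ 2 := Real.coe_toNNReal _ hv0.le
  rw [gaussianReal_of_var_ne_zero _ hvne]
  have hpdf : gaussianPDF μ ((ε ^ 2).toNNReal) =
      fun x => ((Real.toNNReal (gaussianPDFReal μ ((ε ^ 2).toNNReal) x) : ℝ≥0) : ℝ≥0∞) := by
    funext x
    rfl
  rw [hpdf, integral_withDensity_eq_integral_smul
    ((measurable_gaussianPDFReal _ _).real_toNNReal) _]
  have h1p : (0:ℝ) < 1 + h := by linarith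
  set b : ℝ := h / (2 * ε ^ 2) + 1 / (2 * ε ^ 2) with hbdef
  have hbpos : 0 < b := by positivity
  have hb2 : b = (1 + h) / (2 * ε ^ 2) := by rw [hbdef]; field_simp; ring
  have key : ∀ x : ℝ, (Real.toNNReal (gaussianPDFReal μ ((ε ^ 2).toNNReal) x)) •
      Real.exp (-(h / (2 * ε ^ 2) * x ^ 2)) =
      ((Real.sqrt (2 * π * ε ^ 2))⁻¹ * Real.exp (-μ ^ 2 / (2 * ε ^ 2))) *
        Real.exp (-b * x ^ 2 + (μ / ε ^ 2) * x) := by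
    intro x
    rw [NNReal.smul_def, Real.coe_toNNReal _ (gaussianPDFReal_nonneg _ _ _)]
    rw [gaussianPDFReal, hvv]
    rw [smul_eq_mul]
    have hx : Real.exp (-(x - μ) ^ 2 / (2 * ε ^ 2)) * Real.exp (-(h / (2 * ε ^ 2) * x ^ 2)) =
        Real.exp (-μ ^ 2 / (2 * ε ^ 2)) * Real.exp (-b * x ^ 2 + (μ / ε ^ 2) * x) := by
      rw [← Real.exp_add, ← Real.exp_add]
      congr 1
      rw [hb2]
      field_simp
      ring
    rw [mul_assoc, hx, ← mul_assoc]
  simp_rw [key, integral_const_mul, quad_int b (μ / ε ^ 2) hbpos]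
  have hsq : (Real.sqrt (2 * π * ε ^ 2))⁻¹ * Real.sqrt (π / b) = (Real.sqrt (1 + h))⁻¹ := by
    rw [hb2]
    have : π / ((1 + h) / (2 * ε ^ 2)) = (2 * π * ε ^ 2) / (1 + h) := by
      field_simp
    rw [this, Real.sqrt_div (by positivity)]
    rw [div_eq_mul_inv]
    rw [← mul_assoc, inv_mul_cancel₀ (by positivity), one_mul]
  have hexp : Real.exp (-μ ^ 2 / (2 * ε ^ 2)) * Real.exp ((μ / ε ^ 2) ^ 2 / (4 * b)) =
      Real.exp (-(h * μ ^ 2) / (2 * ε ^ 2 * (1 + h))) := by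
    rw [← Real.exp_add]
    congr 1
    rw [hb2]
    field_simp
    ring
  calc (Real.sqrt (2 * π * ε ^ 2))⁻¹ * Real.exp (-μ ^ 2 / (2 * ε ^ 2)) *
        (Real.sqrt (π / b) * Real.exp ((μ / ε ^ 2) ^ 2 / (4 * b)))
      = ((Real.sqrt (2 * π * ε ^ 2))⁻¹ * Real.sqrt (π / b)) *
        (Real.exp (-μ ^ 2 / (2 * ε ^ 2)) * Real.exp ((μ / ε ^ 2) ^ 2 / (4 * b))) := by ring
    _ = _ := by rw [hsq, hexp]; exact (mul_comm _ _).trans (div_eq_mul_inv _ _).symm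

lemma integral_pi_prod : ∀ {n : ℕ} (μ : Fin n → Measure ℝ), (∀ i, IsProbabilityMeasure (μ i)) →
    ∀ f : Fin n → ℝ → ℝ,
    ∫ x : Fin n → ℝ, ∏ i, f i (x i) ∂Measure.pi μ = ∏ i, ∫ x, f i x ∂(μ i) := by
  intro n
  induction n with
  | zero =>
      intro μ hμ f
      have : IsProbabilityMeasure (Measure.pi μ) := inferInstance
      simp [integral_const, measure_univ]
  | succ n n_ih =>
      intro μ hμ f
      have := fun i => hμ i
      calc ∫ x : Fin (n+1) → ℝ, ∏ i, f i (x i) ∂Measure.pi μ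
          = ∫ x : ℝ × (Fin n → ℝ), f 0 x.1 * ∏ i : Fin n, f i.succ (x.2 i)
              ∂((μ 0).prod (Measure.pi fun i => μ i.succ)) := by
            rw [← ((measurePreserving_piFinSuccAbove μ 0).symm).integral_comp']
            simp_rw [MeasurableEquiv.piFinSuccAbove_symm_apply, Fin.insertNthEquiv,
              Fin.prod_univ_succ, Fin.insertNth_zero, Equiv.coe_fn_mk, Fin.cons_succ,
              Fin.zero_succAbove, cast_eq, Fin.cons_zero]
        _ = (∫ x, f 0 x ∂(μ 0)) * ∫ y : Fin n → ℝ, ∏ i : Fin n, f i.succ (y i)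
              ∂(Measure.pi fun i => μ i.succ) :=
            integral_prod_mul (L := ℝ) (f 0) (fun y : Fin n → ℝ => ∏ i : Fin n, f i.succ (y i))
        _ = (∫ x, f 0 x ∂(μ 0)) * ∏ i : Fin n, ∫ x, f i.succ x ∂(μ i.succ) := by
            rw [n_ih (fun i => μ i.succ) (fun i => inferInstance) (fun i => f i.succ)]
        _ = ∏ i, ∫ x, f i x ∂(μ i) := by rw [Fin.prod_univ_succ]

lemma reindexF (f : ℕ → ℝ) (d D : ℕ) :
    ∑ i ∈ Finset.univ.filter (fun i : Fin D => d ≤ (i : ℕ)), f ((i : ℕ) + 1)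
      = ∑ j ∈ Finset.Ioc d D, f j := by
  rw [Finset.sum_filter, Fin.sum_univ_eq_sum_range (fun i => if d ≤ i then f (i + 1) else 0) D,
    ← Finset.sum_filter]
  have h1 : (Finset.range D).filter (fun i => d ≤ i) = Finset.Ico d D := by
    ext i; simp [Finset.mem_filter, Finset.mem_range, Finset.mem_Ico]; omega
  rw [h1]
  apply Finset.sum_nbij' (fun a => a + 1) (fun b => b - 1) <;>
    (intros; simp_all [Finset.mem_Ico, Finset.mem_Ioc] <;> omega)

lemma card_filter_le (d D : ℕ) :
    (Finset.univ.filter (fun i : Fin D => d ≤ (i : ℕ))).card = D - d := by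
  have := reindexF (fun _ => (1 : ℝ)) d D
  simp only [Finset.sum_const, nsmul_eq_mul, mul_one, Nat.card_Ioc] at this
  exact_mod_cast this

lemma chernoff (ε A τ h : ℝ) (d D : ℕ) (θ' : Fin D → ℝ) (hε : 0 < ε) (hh0 : 0 ≤ h)
    (hdD : d < D)
    (hT : τ * ((D : ℝ) - d) * ε ^ 2 ≤
      ∑ i ∈ Finset.univ.filter (fun i : Fin D => d ≤ (i : ℕ)), θ' i ^ 2) :
    Measure.pi (fun i : Fin D => gaussianReal (θ' i) ((ε ^ 2).toNNReal))
      {y | ∑ i ∈ Finset.univ.filter (fun i : Fin D => d ≤ (i : ℕ)), y i ^ 2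
            ≤ A * ε ^ 2 * ((D : ℝ) - d)}
      ≤ ENNReal.ofReal (Real.exp
          ((A * h - Real.log (1 + h) - τ * h / (1 + h)) / 2 * ((D : ℝ) - d))) := by
  have h1p : (0 : ℝ) < 1 + h := by linarith
  have hm0 : (0:ℝ) < (D : ℝ) - d := by
    have : (d : ℝ) < (D : ℝ) := by exact_mod_cast hdD
    linarith
  set S := Finset.univ.filter (fun i : Fin D => d ≤ (i : ℕ)) with hS
  set ν := Measure.pi (fun i : Fin D => gaussianReal (θ' i) ((ε ^ 2).toNNReal)) with hν
  set s : ℝ := h / (2 * ε ^ 2) with hs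
  have hs0 : 0 ≤ s := by positivity
  set c : ℝ := A * ε ^ 2 * ((D : ℝ) - d) with hc
  have hsum_meas : Measurable (fun y : Fin D → ℝ => ∑ i ∈ S, y i ^ 2) :=
    Finset.measurable_sum _ fun i _ => (measurable_pi_apply i).pow_const 2
  have hgm : Measurable (fun y : Fin D → ℝ => Real.exp (s * (c - ∑ i ∈ S, y i ^ 2))) :=
    ((measurable_const.sub hsum_meas).const_mul s).exp
  have hsumnn : ∀ y : Fin D → ℝ, (0:ℝ) ≤ ∑ i ∈ S, y i ^ 2 :=
    fun y => Finset.sum_nonneg fun i _ => sq_nonneg _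
  -- Step 1: Markov
  have step1 : ν {y | ∑ i ∈ S, y i ^ 2 ≤ c}
      ≤ ∫⁻ y, ENNReal.ofReal (Real.exp (s * (c - ∑ i ∈ S, y i ^ 2))) ∂ν := by
    calc ν {y | ∑ i ∈ S, y i ^ 2 ≤ c} = ∫⁻ _ in {y | ∑ i ∈ S, y i ^ 2 ≤ c}, 1 ∂ν :=
        (setLIntegral_one _).symm
      _ ≤ ∫⁻ y in {y | ∑ i ∈ S, y i ^ 2 ≤ c},
            ENNReal.ofReal (Real.exp (s * (c - ∑ i ∈ S, y i ^ 2))) ∂ν := by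
          apply setLIntegral_mono hgm.ennreal_ofReal
          intro y hy
          rw [ENNReal.one_le_ofReal]
          calc (1:ℝ) = Real.exp 0 := Real.exp_zero.symm
            _ ≤ _ := Real.exp_le_exp.2
                (mul_nonneg hs0 (by simpa [sub_nonneg] using hy))
      _ ≤ _ := setLIntegral_le_lintegral _ _
  -- Step 2: lintegral to integral
  have hint : Integrable (fun y : Fin D → ℝ => Real.exp (s * (c - ∑ i ∈ S, y i ^ 2))) ν := by
    apply Integrable.mono' (integrable_const (Real.exp (s * c))) hgm.aestronglyMeasurable
    filter_upwards with y
    rw [Real.norm_of_nonneg (Real.exp_pos _).le]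
    apply Real.exp_le_exp.2
    nlinarith [hsumnn y, mul_nonneg hs0 (hsumnn y)]
  have step2 : ∫⁻ y, ENNReal.ofReal (Real.exp (s * (c - ∑ i ∈ S, y i ^ 2))) ∂ν
      = ENNReal.ofReal (∫ y, Real.exp (s * (c - ∑ i ∈ S, y i ^ 2)) ∂ν) :=
    (ofReal_integral_eq_lintegral_ofReal hint
      (Filter.Eventually.of_forall fun y => (Real.exp_pos _).le)).symm
  -- Step 3
  have hprodint : ∫ y, Real.exp (s * (c - ∑ i ∈ S, y i ^ 2)) ∂ν
      = Real.exp (s * c) *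
        (Real.exp (-h / (2 * ε ^ 2 * (1 + h)) * ∑ i ∈ S, θ' i ^ 2) /
          Real.sqrt (1 + h) ^ (D - d)) := by
    have hgprod : ∀ y : Fin D → ℝ, Real.exp (s * (c - ∑ i ∈ S, y i ^ 2)) =
        Real.exp (s * c) * ∏ i : Fin D,
          (fun (i : Fin D) (t : ℝ) => if d ≤ (i : ℕ) then Real.exp (-(s * t ^ 2)) else 1)
            i (y i) := by
      intro y
      simp only
      rw [← Finset.prod_filter (fun i : Fin D => d ≤ (i : ℕ))
        (fun i => Real.exp (-(s * y i ^ 2))), ← hS, ← Real.exp_sum, ← Real.exp_add]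
      congr 1
      rw [show ∑ i ∈ S, -(s * y i ^ 2) = -(s * ∑ i ∈ S, y i ^ 2) by
        rw [Finset.sum_neg_distrib, ← Finset.mul_sum]]
      ring
    simp_rw [hgprod]
    rw [integral_const_mul]
    have h4 := integral_pi_prod (fun i => gaussianReal (θ' i) ((ε ^ 2).toNNReal))
      (fun i => inferInstance)
      (fun (i : Fin D) (t : ℝ) => if d ≤ (i : ℕ) then Real.exp (-(s * t ^ 2)) else 1)
    rw [hν, h4]
    have key : ∀ i : Fin D,
        (∫ t : ℝ, (fun (i : Fin D) (t : ℝ) =>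
            if d ≤ (i : ℕ) then Real.exp (-(s * t ^ 2)) else 1) i t
          ∂(gaussianReal (θ' i) ((ε ^ 2).toNNReal)))
        = if d ≤ (i : ℕ) then
            Real.exp (-(h * θ' i ^ 2) / (2 * ε ^ 2 * (1 + h))) / Real.sqrt (1 + h)
          else 1 := by
      intro i
      by_cases hi : d ≤ (i : ℕ) <;> simp only [hi, if_true, if_false]
      · exact gauss_mgf ε h (θ' i) hε hh0
      · simp
    simp_rw [key]
    rw [← Finset.prod_filter (fun i : Fin D => d ≤ (i : ℕ))
      (fun i => Real.exp (-(h * θ' i ^ 2) / (2 * ε ^ 2 * (1 + h))) / Real.sqrt (1 + h)), ← hS]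
    rw [Finset.prod_div_distrib, ← Real.exp_sum, Finset.prod_const, hS, card_filter_le, ← hS]
    congr 2
    rw [Finset.mul_sum]
    congr 1
    exact Finset.sum_congr rfl fun i _ => by ring
  -- Step 4
  have hcast : ((D - d : ℕ) : ℝ) = (D : ℝ) - d := by
    rw [Nat.cast_sub hdD.le]
  have hsqrt : Real.sqrt (1 + h) = Real.exp (Real.log (1 + h) / 2) := by
    rw [← Real.exp_log (Real.sqrt_pos.mpr h1p), Real.log_sqrt h1p.le]
  have hpow : Real.sqrt (1 + h) ^ (D - d)
      = Real.exp (((D - d : ℕ) : ℝ) * (Real.log (1 + h) / 2)) := by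
    rw [hsqrt, ← Real.exp_nat_mul]
  have hfinal : Real.exp (s * c) *
      (Real.exp (-h / (2 * ε ^ 2 * (1 + h)) * ∑ i ∈ S, θ' i ^ 2) /
        Real.sqrt (1 + h) ^ (D - d))
      ≤ Real.exp ((A * h - Real.log (1 + h) - τ * h / (1 + h)) / 2 * ((D : ℝ) - d)) := by
    rw [hpow, ← Real.exp_sub, ← Real.exp_add]
    apply Real.exp_le_exp.2
    have hsc : s * c = A * h / 2 * ((D : ℝ) - d) := by
      rw [hs, hc]
      field_simp
    have hkey : -h / (2 * ε ^ 2 * (1 + h)) * ∑ i ∈ S, θ' i ^ 2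
        ≤ -(τ * h / (1 + h) / 2) * ((D : ℝ) - d) := by
      have h2 := mul_le_mul_of_nonneg_left hT
        (show (0:ℝ) ≤ h / (2 * ε ^ 2 * (1 + h)) by positivity)
      have h3 : h / (2 * ε ^ 2 * (1 + h)) * (τ * ((D : ℝ) - d) * ε ^ 2)
          = τ * h / (1 + h) / 2 * ((D : ℝ) - d) := by
        field_simp
      rw [h3] at h2
      rw [show -h / (2 * ε ^ 2 * (1 + h)) * ∑ i ∈ S, θ' i ^ 2
          = -(h / (2 * ε ^ 2 * (1 + h)) * ∑ i ∈ S, θ' i ^ 2) by ring,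
        show -(τ * h / (1 + h) / 2) * ((D : ℝ) - d) = -(τ * h / (1 + h) / 2 * ((D : ℝ) - d)) by
          ring]
      exact neg_le_neg h2
    rw [hsc, hcast]
    nlinarith [hkey]
  calc ν {y | ∑ i ∈ S, y i ^ 2 ≤ c}
      ≤ ∫⁻ y, ENNReal.ofReal (Real.exp (s * (c - ∑ i ∈ S, y i ^ 2))) ∂ν := step1
    _ = ENNReal.ofReal (∫ y, Real.exp (s * (c - ∑ i ∈ S, y i ^ 2)) ∂ν) := step2
    _ ≤ _ := by
        rw [hprodint]
        exact ENNReal.ofReal_le_ofReal hfinal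

lemma gFun_eq (h a t : ℝ) :
    gFun h a t = (-(a * h) + Real.log (1 + h) + t * h / (1 + h)) / 2 := by
  unfold gFun fFun
  rw [sub_neg_eq_add]
  ring

lemma gFun_contOn (a t : ℝ) : ContinuousOn (fun h => gFun h a t) (Set.Icc (0:ℝ) 1) := by
  have hfe : (fun h => gFun h a t)
      = fun h => (-(a * h) + Real.log (1 + h) + t * h / (1 + h)) / 2 :=
    funext fun h => gFun_eq h a t
  rw [hfe]
  apply ContinuousOn.div_const
  apply ContinuousOn.add
  apply ContinuousOn.add
  · exact ((continuous_const.mul continuous_id).neg).continuousOn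
  · apply ContinuousOn.log (continuous_const.add continuous_id).continuousOn
    intro x hx
    have := hx.1
    intro hc
    simp only [Pi.add_apply, id_eq] at hc
    linarith
  · apply ContinuousOn.div ((continuous_const.mul continuous_id).continuousOn)
      ((continuous_const.add continuous_id).continuousOn)
    intro x hx
    have := hx.1
    intro hc
    simp only [Pi.add_apply, id_eq] at hc
    linarith

lemma gSup_exists_max (a t : ℝ) :
    ∃ h₀ ∈ Set.Icc (0:ℝ) 1, gSup a t = gFun h₀ a t ∧
      ∀ h ∈ Set.Icc (0:ℝ) 1, gFun h a t ≤ gFun h₀ a t := by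
  obtain ⟨h₀, hmem, hmax⟩ := isCompact_Icc.exists_isMaxOn
    (Set.nonempty_Icc.mpr zero_le_one) (gFun_contOn a t)
  refine ⟨h₀, hmem, ?_, fun h hh => hmax hh⟩
  apply IsGreatest.csSup_eq
  exact ⟨⟨h₀, hmem, rfl⟩, by rintro y ⟨x, hx, rfl⟩; exact hmax hx⟩

lemma gSup_pos (a t : ℝ) (ha : a < 1 + t) : 0 < gSup a t := by
  set φ : ℝ → ℝ := fun h => gFun h a t with hφ
  have hφ0 : φ 0 = 0 := by
    rw [hφ]; simp only; rw [gFun_eq]; simp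
  have hder : HasDerivAt φ ((-a + 1 + t) / 2) 0 := by
    have hfe : φ = fun h => (-(a * h) + Real.log (1 + h) + t * h / (1 + h)) / 2 :=
      funext fun h => gFun_eq h a t
    rw [hfe]
    have h1 : HasDerivAt (fun h : ℝ => -(a * h)) (-a) 0 := by
      exact (((hasDerivAt_id (0:ℝ)).const_mul a).neg).congr_deriv (by simp)
    have h2 : HasDerivAt (fun h : ℝ => Real.log (1 + h)) 1 0 := by
      have hb : HasDerivAt (fun h : ℝ => 1 + h) 1 0 := by
        simpa using (hasDerivAt_id (0:ℝ)).const_add 1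
      simpa using hb.log (by norm_num)
    have h3 : HasDerivAt (fun h : ℝ => t * h / (1 + h)) t 0 := by
      have hb : HasDerivAt (fun h : ℝ => 1 + h) 1 0 := by
        simpa using (hasDerivAt_id (0:ℝ)).const_add 1
      have ht : HasDerivAt (fun h : ℝ => t * h) t 0 := by
        simpa using (hasDerivAt_id (0:ℝ)).const_mul t
      have := ht.div hb (by norm_num)
      exact this.congr_deriv (by simp)
    exact ((h1.add h2).add h3).div_const 2
  have hpos : (0:ℝ) < (-a + 1 + t) / 2 := by linarith
  rw [hasDerivAt_iff_tendsto_slope] at hder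
  have hev : ∀ᶠ x in nhdsWithin (0:ℝ) (Set.Ioi 0), 0 < slope φ 0 x :=
    (hder.mono_left (nhdsWithin_mono _ (fun x hx => ne_of_gt hx))).eventually
      (eventually_gt_nhds hpos)
  have hev2 : ∀ᶠ x in nhdsWithin (0:ℝ) (Set.Ioi 0), x ∈ Set.Ioc (0:ℝ) 1 :=
    Ioc_mem_nhdsGT_of_mem ⟨le_refl 0, zero_lt_one⟩
  obtain ⟨x, hx1, hx2⟩ := (hev.and hev2).exists
  have hxpos : 0 < x := hx2.1
  have hφx : 0 < φ x := by
    rw [slope_def_field, hφ0, sub_zero, sub_zero] at hx1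
    have := mul_pos hx1 hxpos
    rwa [div_mul_cancel₀ _ (ne_of_gt hxpos)] at this
  have hbdd : BddAbove ((fun h => gFun h a t) '' Set.Icc 0 1) :=
    (isCompact_Icc.image_of_continuousOn (gFun_contOn a t)).bddAbove
  have hle : φ x ≤ gSup a t :=
    le_csSup hbdd ⟨x, ⟨hxpos.le, hx2.2⟩, rfl⟩
  linarith

lemma tailSum_split (θ : ℕ → ℝ) (hsum : Summable (fun i => θ i ^ 2)) {d D : ℕ} (hdD : d ≤ D) :
    tailSum θ d = ∑ j ∈ Finset.Ioc d D, θ j ^ 2 + tailSum θ D := by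
  classical
  have h1 : Summable (fun i : ℕ => if D < i then θ i ^ 2 else 0) := by
    apply Summable.of_nonneg_of_le (fun n => ?_) (fun n => ?_) hsum
    · by_cases h : D < n <;> simp [h, sq_nonneg]
    · by_cases h : D < n <;> simp [h, sq_nonneg]
  have h2 : Summable (fun i : ℕ => if i ∈ Finset.Ioc d D then θ i ^ 2 else 0) :=
    summable_of_ne_finset_zero (s := Finset.Ioc d D) (fun b hb => if_neg hb)
  have key : ∀ i : ℕ, (if d < i then θ i ^ 2 else 0)
      = (if i ∈ Finset.Ioc d D then θ i ^ 2 else 0) + (if D < i then θ i ^ 2 else 0) := by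
    intro i
    simp only [Finset.mem_Ioc]
    by_cases ha : d < i
    · by_cases hb : D < i
      · rw [if_pos ha, if_neg (by omega : ¬(d < i ∧ i ≤ D)), if_pos hb, zero_add]
      · rw [if_pos ha, if_pos (by omega : d < i ∧ i ≤ D), if_neg hb, add_zero]
    · rw [if_neg ha, if_neg (by omega : ¬(d < i ∧ i ≤ D)),
        if_neg (by omega : ¬(D < i)), add_zero]
  unfold tailSum
  rw [tsum_congr key, Summable.tsum_add h2 h1]
  congr 1
  rw [tsum_eq_sum (s := Finset.Ioc d D) (fun b hb => if_neg hb)]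
  exact Finset.sum_congr rfl fun i hi => if_pos hi

lemma Icc_one_eq_Ioc (k : ℕ) : Finset.Icc 1 k = Finset.Ioc 0 k := by
  ext i; simp [Finset.mem_Icc, Finset.mem_Ioc]; omega

lemma crit_event (ε A : ℝ) (x : ℕ → ℝ) (d D : ℕ) (hd : d ≤ D) :
    critF ε A x d ≤ critF ε A x D ↔
      ∑ j ∈ Finset.Ioc d D, x j ^ 2 ≤ A * ε ^ 2 * ((D : ℝ) - d) := by
  unfold critF
  have hsplit : ∑ i ∈ Finset.Icc 1 D, x i ^ 2
      = ∑ i ∈ Finset.Icc 1 d, x i ^ 2 + ∑ j ∈ Finset.Ioc d D, x j ^ 2 := by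
    rw [Icc_one_eq_Ioc, Icc_one_eq_Ioc, ← Finset.sum_Ioc_consecutive _ (Nat.zero_le d) hd]
  rw [hsplit]
  constructor <;> intro hcd <;> linarith

theorem stmt9 (ε τ A : ℝ) (hε : 0 < ε) (hτ : 0 < τ) (hA0 : 0 < A) (hA : A < 1 + τ) :
    0 < gSup A τ ∧
    ∀ θ : ℕ → ℝ, Summable (fun i => θ i ^ 2) →
    ∀ d : ℕ, 1 ≤ d → d < effDim ε τ θ →
    ∀ P : Measure (ℕ → ℝ), IsGaussianProduct ε θ P →
    P {x | critF ε A x d ≤ critF ε A x (effDim ε τ θ)} ≤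
      ENNReal.ofReal (Real.exp (-(gSup A τ) * ((effDim ε τ θ : ℝ) - d))) := by
  refine ⟨gSup_pos A τ hA, ?_⟩
  intro θ hsum d hd hdD P hP
  obtain ⟨hPprob, hPmap⟩ := hP
  set D := effDim ε τ θ with hD
  -- D belongs to the minimizing set
  have hDmem : D ∈ {d : ℕ | 1 ≤ d ∧ ∀ d' : ℕ, 1 ≤ d' → rErr ε τ θ d ≤ rErr ε τ θ d'} := by
    rcases Set.eq_empty_or_nonempty
      {d : ℕ | 1 ≤ d ∧ ∀ d' : ℕ, 1 ≤ d' → rErr ε τ θ d ≤ rErr ε τ θ d'} with he | hne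
    · exfalso
      have : D = 0 := by rw [hD]; unfold effDim; rw [he, Nat.sInf_empty]
      omega
    · exact Nat.sInf_mem hne
  have hrr : rErr ε τ θ D ≤ rErr ε τ θ d := hDmem.2 d hd
  unfold rErr at hrr
  have hsplit := tailSum_split θ hsum hdD.le
  have hTsum : τ * ((D : ℝ) - d) * ε ^ 2 ≤ ∑ j ∈ Finset.Ioc d D, θ j ^ 2 := by
    have hc1 : (d : ℝ) ≤ (D : ℝ) := by exact_mod_cast hdD.le
    nlinarith [hrr, hsplit]
  -- filter-sum form of hT
  have hT : τ * ((D : ℝ) - d) * ε ^ 2 ≤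
      ∑ i ∈ Finset.univ.filter (fun i : Fin D => d ≤ (i : ℕ)), θ ((i : ℕ) + 1) ^ 2 := by
    rw [reindexF (fun j => θ j ^ 2) d D]
    exact hTsum
  -- event rewriting
  have hφmeas : Measurable (fun x : ℕ → ℝ => fun i : Fin D => x ((i : ℕ) + 1)) :=
    measurable_pi_lambda _ fun i => measurable_pi_apply _
  have hsetmeas : MeasurableSet {y : Fin D → ℝ |
      ∑ i ∈ Finset.univ.filter (fun i : Fin D => d ≤ (i : ℕ)), y i ^ 2
        ≤ A * ε ^ 2 * ((D : ℝ) - d)} :=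
    measurableSet_le (Finset.measurable_sum _ fun i _ => (measurable_pi_apply i).pow_const 2)
      measurable_const
  have hev : {x : ℕ → ℝ | critF ε A x d ≤ critF ε A x D}
      = (fun x : ℕ → ℝ => fun i : Fin D => x ((i : ℕ) + 1)) ⁻¹' {y : Fin D → ℝ |
          ∑ i ∈ Finset.univ.filter (fun i : Fin D => d ≤ (i : ℕ)), y i ^ 2
            ≤ A * ε ^ 2 * ((D : ℝ) - d)} := by
    ext x
    simp only [Set.mem_setOf_eq, Set.mem_preimage]
    rw [crit_event ε A x d D hdD.le, ← reindexF (fun j => x j ^ 2) d D]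
  rw [hev, ← Measure.map_apply hφmeas hsetmeas, hPmap D]
  -- choose the maximizing h
  obtain ⟨h₀, hmem, hgs, _⟩ := gSup_exists_max A τ
  have hbound := chernoff ε A τ h₀ d D (fun i => θ ((i : ℕ) + 1)) hε hmem.1 hdD hT
  refine hbound.trans (le_of_eq ?_)
  congr 1
  rw [hgs, gFun_eq]
  ring
end
end

section
/- Let s, Q, τ, ε > 0 and let θ belong to the Sobolev-type tail class T_s(Q) = {θ square-summable : ∑_{k>m} θ_k² ≤ Q m^{−2s} for all m ≥ 1}. Then, with c(s) = (2s)^{−2s/(2s+1)} + (2s)^{1/(2s+1)}: r_τ(θ) ≤ c(s) Q^{1/(2s+1)} (τ ε²)^{2s/(2s+1)} + τ ε², and consequently d_τ(θ) ≤ c(s) Q^{1/(2s+1)} (τ ε²)^{−1/(2s+1)} + 1. -/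
open MeasureTheory ProbabilityTheory

noncomputable section

lemma tailSum_nonneg (θ : ℕ → ℝ) (d : ℕ) : 0 ≤ tailSum θ d := by
  apply tsum_nonneg
  intro i; split <;> positivity

lemma effDim_mem (ε τ : ℝ) (hτ : 0 < τ) (hε : 0 < ε) (θ : ℕ → ℝ) :
    effDim ε τ θ ∈ {d : ℕ | 1 ≤ d ∧ ∀ d' : ℕ, 1 ≤ d' → rErr ε τ θ d ≤ rErr ε τ θ d'} := by
  apply Nat.sInf_mem
  set t := τ * ε ^ 2 with ht_def
  have ht : 0 < t := by positivity
  set r1 := rErr ε τ θ 1 with hr1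
  set N : ℕ := ⌈r1 / t⌉₊ + 1 with hN
  have hN1 : 1 ≤ N := Nat.le_add_left 1 _
  have htN : r1 < t * N := by
    have h1 : r1 / t ≤ (⌈r1 / t⌉₊ : ℝ) := Nat.le_ceil _
    have h2 : r1 ≤ t * ⌈r1 / t⌉₊ := by
      rw [mul_comm]; exact (div_le_iff₀ ht).mp h1
    have : (N : ℝ) = (⌈r1 / t⌉₊ : ℝ) + 1 := by push_cast [hN]; ring
    rw [this]; nlinarith
  obtain ⟨d₀, hd₀mem, hd₀min⟩ :=
    Finset.exists_min_image (Finset.Icc 1 N) (rErr ε τ θ) ⟨1, by simp [hN1]⟩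
  refine ⟨d₀, (Finset.mem_Icc.mp hd₀mem).1, fun d' hd' => ?_⟩
  by_cases hdN : d' ≤ N
  · exact hd₀min d' (Finset.mem_Icc.mpr ⟨hd', hdN⟩)
  · push_neg at hdN
    have hle1 : rErr ε τ θ d₀ ≤ r1 := hd₀min 1 (by simp [hN1])
    have h3 : (N : ℝ) ≤ (d' : ℝ) := by exact_mod_cast (Nat.le_of_lt hdN).trans (le_refl d')
    have h4 : t * N ≤ t * d' := by
      have : (N:ℝ) ≤ d' := by exact_mod_cast Nat.le_of_lt hdN
      nlinarith
    have h5 : t * (d' : ℝ) ≤ rErr ε τ θ d' := by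
      have := tailSum_nonneg θ d'
      simp only [rErr, ht_def]; nlinarith
    linarith

lemma key_identity (s Q t : ℝ) (hs : 0 < s) (hQ : 0 < Q) (ht : 0 < t) :
    Q * ((2 * s * Q / t) ^ ((1:ℝ)/(2*s+1))) ^ (-(2*s)) + t * (2 * s * Q / t) ^ ((1:ℝ)/(2*s+1)) =
    ((2*s) ^ (-(2*s)/(2*s+1)) + (2*s) ^ ((1:ℝ)/(2*s+1))) * Q ^ ((1:ℝ)/(2*s+1)) * t ^ (2*s/(2*s+1)) := by
  have h2s : (0:ℝ) < 2 * s := by linarith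
  have hb : (0:ℝ) < 2 * s * Q / t := by positivity
  have hden : (0:ℝ) < 2 * s + 1 := by linarith
  have hsplit : ∀ p : ℝ, (2 * s * Q / t) ^ p = (2*s) ^ p * Q ^ p * t ^ (-p) := by
    intro p
    rw [Real.div_rpow (by positivity) ht.le, Real.mul_rpow h2s.le hQ.le,
        Real.rpow_neg ht.le, div_eq_mul_inv]
  rw [← Real.rpow_mul hb.le]
  have e1 : (1:ℝ)/(2*s+1) * (-(2*s)) = -(2*s)/(2*s+1) := by ring
  rw [e1, hsplit, hsplit]
  have hQ1 : Q * Q ^ (-(2*s)/(2*s+1)) = Q ^ ((1:ℝ)/(2*s+1)) := by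
    nth_rewrite 1 [← Real.rpow_one Q]
    rw [← Real.rpow_add hQ]; congr 1; field_simp; ring
  have ht1 : t * t ^ (-((1:ℝ)/(2*s+1))) = t ^ (2*s/(2*s+1)) := by
    nth_rewrite 1 [← Real.rpow_one t]
    rw [← Real.rpow_add ht]; congr 1; field_simp; ring
  have e2 : -(-(2*s)/(2*s+1)) = 2*s/(2*s+1) := by ring
  rw [e2]
  linear_combination ((2*s) ^ (-(2*s)/(2*s+1)) * t ^ (2*s/(2*s+1))) * hQ1 +
    ((2*s) ^ ((1:ℝ)/(2*s+1)) * Q ^ ((1:ℝ)/(2*s+1))) * ht1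

theorem stmt18 (s Q τ ε : ℝ) (hs : 0 < s) (hQ : 0 < Q) (hτ : 0 < τ) (hε : 0 < ε)
    (θ : ℕ → ℝ) (hθ : Summable fun i => θ i ^ 2)
    (hT : ∀ m : ℕ, 1 ≤ m → tailSum θ m ≤ Q * (m : ℝ) ^ (-(2 * s))) :
    rErr ε τ θ (effDim ε τ θ) ≤
      ((2 * s) ^ (-(2 * s) / (2 * s + 1)) + (2 * s) ^ ((1 : ℝ) / (2 * s + 1))) *
        Q ^ ((1 : ℝ) / (2 * s + 1)) * (τ * ε ^ 2) ^ (2 * s / (2 * s + 1)) + τ * ε ^ 2 ∧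
    (effDim ε τ θ : ℝ) ≤
      ((2 * s) ^ (-(2 * s) / (2 * s + 1)) + (2 * s) ^ ((1 : ℝ) / (2 * s + 1))) *
        Q ^ ((1 : ℝ) / (2 * s + 1)) * (τ * ε ^ 2) ^ (-(1 : ℝ) / (2 * s + 1)) + 1 := by
  set t := τ * ε ^ 2 with ht_def
  have ht : 0 < t := by positivity
  set x : ℝ := (2 * s * Q / t) ^ ((1:ℝ)/(2*s+1)) with hx_def
  have hx : 0 < x := Real.rpow_pos_of_pos (by positivity) _
  set m : ℕ := ⌈x⌉₊ with hm_def
  have hm1 : 1 ≤ m := Nat.one_le_ceil_iff.mpr hx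
  have hxm : x ≤ (m : ℝ) := Nat.le_ceil x
  have hmx1 : (m : ℝ) < x + 1 := Nat.ceil_lt_add_one hx.le
  obtain ⟨hD1, hDmin⟩ := effDim_mem ε τ hτ hε θ
  have hrm : rErr ε τ θ (effDim ε τ θ) ≤ rErr ε τ θ m := hDmin m hm1
  have key := key_identity s Q t hs hQ ht
  rw [← hx_def] at key
  have h1 : tailSum θ m ≤ Q * (m:ℝ) ^ (-(2*s)) := hT m hm1
  have h2 : (m:ℝ) ^ (-(2*s)) ≤ x ^ (-(2*s)) :=
    Real.rpow_le_rpow_of_nonpos hx hxm (by linarith)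
  have h2' : Q * (m:ℝ) ^ (-(2*s)) ≤ Q * x ^ (-(2*s)) :=
    mul_le_mul_of_nonneg_left h2 hQ.le
  have h3 : τ * (m:ℝ) * ε ^ 2 = t * m := by rw [ht_def]; ring
  have h4 : t * (m:ℝ) ≤ t * (x + 1) := by nlinarith
  have hbound : rErr ε τ θ m ≤
      ((2*s) ^ (-(2*s)/(2*s+1)) + (2*s) ^ ((1:ℝ)/(2*s+1))) * Q ^ ((1:ℝ)/(2*s+1)) *
        t ^ (2*s/(2*s+1)) + t := by
    have : rErr ε τ θ m ≤ Q * x ^ (-(2*s)) + t * x + t := by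
      show tailSum θ m + τ * (m:ℝ) * ε ^ 2 ≤ _
      rw [h3]; linarith [h1.trans h2']
    linarith [key]
  have hmain : rErr ε τ θ (effDim ε τ θ) ≤
      ((2*s) ^ (-(2*s)/(2*s+1)) + (2*s) ^ ((1:ℝ)/(2*s+1))) * Q ^ ((1:ℝ)/(2*s+1)) *
        t ^ (2*s/(2*s+1)) + t := hrm.trans hbound
  refine ⟨hmain, ?_⟩
  have hts : t ^ (2*s/(2*s+1)) = t * t ^ (-(1:ℝ)/(2*s+1)) := by
    nth_rewrite 2 [← Real.rpow_one t]
    rw [← Real.rpow_add ht]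
    congr 1
    have : (2*s+1) ≠ 0 := by positivity
    field_simp; ring
  have hlow : t * ((effDim ε τ θ : ℝ)) ≤ rErr ε τ θ (effDim ε τ θ) := by
    have := tailSum_nonneg θ (effDim ε τ θ)
    show _ ≤ tailSum θ (effDim ε τ θ) + τ * (effDim ε τ θ : ℝ) * ε ^ 2
    rw [ht_def]; nlinarith
  have h5 : t * (effDim ε τ θ : ℝ) ≤
      t * (((2*s) ^ (-(2*s)/(2*s+1)) + (2*s) ^ ((1:ℝ)/(2*s+1))) * Q ^ ((1:ℝ)/(2*s+1)) *
        t ^ (-(1:ℝ)/(2*s+1)) + 1) := by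
    have := hlow.trans hmain
    rw [hts] at this
    nlinarith [this]
  exact le_of_mul_le_mul_left h5 ht
end
end
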